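/- Let A ∈ ℝ^{m×n} with n ≥ 2 have unit Euclidean-norm columns (‖A_j‖₂ = 1 for all j), let μ(A) = max_{i≠j} |A_iᵀ A_j| be its mutual coherence, and for k ∈ ℕ with 1 ≤ k ≤ n let δ_k(A) be the order-k restricted isometry constant, i.e., the smallest δ ≥ 0 such that (1−δ)‖x‖₂² ≤ ‖Ax‖₂² ≤ (1+δ)‖x‖₂² holds for all x ∈ ℝⁿ with 1 ≤ ‖x‖₀ ≤ k. Then δ_k(A) ≤ (k−1)·μ(A). -/

import Mathlib

/-!
Write `G = AᵀA`. Unit columns make `G - 1` vanish on the diagonal, and coherence bounds its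
off-diagonal entries by `μ`, so `|‖Ax‖² - ‖x‖²| = |xᵀ(G - 1)x| ≤ μ ∑_{p ≠ q} |x_p||x_q|
= μ((∑ |x_p|)² - ‖x‖²)`. By Cauchy–Schwarz on the support of `x`, `(∑ |x_p|)² ≤ ‖x‖₀ ‖x‖²`,
so the deviation is at most `(k - 1)μ‖x‖²` when `‖x‖₀ ≤ k`; hence `(k - 1)μ` is one of the
constants over which `δ_k` is the least.
-/

/-- The number of nonzero entries of a vector (the "ℓ₀-norm"). -/
noncomputable def card0 {n : ℕ} (x : Fin n → ℝ) : ℕ := {i | x i ≠ 0}.ncard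

open Finset Matrix

theorem card0_eq_card_filter {n : ℕ} (x : Fin n → ℝ) : card0 x = #{p | x p ≠ 0} := by
  rw [card0, ← Set.ncard_coe_finset]
  simp

theorem sq_sum_abs_le_card0_mul_sum_sq {n : ℕ} (x : Fin n → ℝ) :
    (∑ p, |x p|) ^ 2 ≤ card0 x * ∑ p, x p ^ 2 := by
  have hsupp_abs : ∑ p, |x p| = ∑ p with x p ≠ 0, |x p| :=
    (sum_filter_of_ne fun p _ h => by simpa using h).symm
  have hsupp_sq : ∑ p, x p ^ 2 = ∑ p with x p ≠ 0, x p ^ 2 :=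
    (sum_filter_of_ne fun p _ h => by simpa using h).symm
  rw [hsupp_abs, hsupp_sq, card0_eq_card_filter]
  simpa only [sq_abs] using sq_sum_le_card_mul_sum_sq (s := {p | x p ≠ 0}) (f := fun p => |x p|)

section

variable {ι κ : Type*} [Fintype ι] [Fintype κ]

theorem abs_dotProduct_mulVec_le_of_diag_eq_zero [DecidableEq ι] {M : Matrix ι ι ℝ} {μ : ℝ}
    (hdiag : ∀ p, M p p = 0) (hoff : ∀ p q, p ≠ q → |M p q| ≤ μ) (x : ι → ℝ) :
    |x ⬝ᵥ M *ᵥ x| ≤ μ * ((∑ p, |x p|) ^ 2 - ∑ p, x p ^ 2) := by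
  have hrow : ∀ p, ∑ q, |x p| * |M p q| * |x q| ≤ μ * (∑ q, |x p| * |x q| - x p ^ 2) := by
    intro p
    calc ∑ q, |x p| * |M p q| * |x q| = ∑ q ∈ univ.erase p, |x p| * |M p q| * |x q| := by
          rw [sum_erase _ (by simp [hdiag])]
      _ ≤ ∑ q ∈ univ.erase p, μ * (|x p| * |x q|) := by
          refine sum_le_sum fun q hq => ?_
          rw [mul_right_comm, mul_comm μ]
          exact mul_le_mul_of_nonneg_left (hoff p q (ne_of_mem_erase hq).symm) (by positivity)
      _ = μ * (∑ q, |x p| * |x q| - x p ^ 2) := by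
          rw [← mul_sum, sum_erase_eq_sub (mem_univ p), abs_mul_abs_self, sq]
  calc |x ⬝ᵥ M *ᵥ x| = |∑ p, ∑ q, x p * M p q * x q| := by
        simp only [dotProduct, mulVec, mul_sum, mul_assoc]
    _ ≤ ∑ p, ∑ q, |x p| * |M p q| * |x q| := by
        refine (abs_sum_le_sum_abs _ _).trans (sum_le_sum fun p _ => ?_)
        refine (abs_sum_le_sum_abs _ _).trans_eq (sum_congr rfl fun q _ => ?_)
        rw [abs_mul, abs_mul]
    _ ≤ ∑ p, μ * (∑ q, |x p| * |x q| - x p ^ 2) := sum_le_sum fun p _ => hrow p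
    _ = μ * ((∑ p, |x p|) ^ 2 - ∑ p, x p ^ 2) := by
        rw [← mul_sum, sum_sub_distrib, sq (∑ p, |x p|), sum_mul_sum]

theorem sum_mulVec_sq_sub_sum_sq [DecidableEq ι] (A : Matrix κ ι ℝ) (x : ι → ℝ) :
    ∑ i, (A *ᵥ x) i ^ 2 - ∑ p, x p ^ 2 = x ⬝ᵥ (Aᵀ * A - 1) *ᵥ x := by
  rw [sub_mulVec, one_mulVec, dotProduct_sub, ← mulVec_mulVec, dotProduct_mulVec,
    vecMul_transpose]
  simp only [dotProduct, sq]

theorem abs_sum_mulVec_sq_sub_sum_sq_le (A : Matrix κ ι ℝ) {μ : ℝ}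
    (hcols : ∀ j, ∑ i, A i j ^ 2 = 1)
    (hcoh : ∀ p q, p ≠ q → |∑ i, A i p * A i q| ≤ μ) (x : ι → ℝ) :
    |∑ i, (A *ᵥ x) i ^ 2 - ∑ p, x p ^ 2| ≤ μ * ((∑ p, |x p|) ^ 2 - ∑ p, x p ^ 2) := by
  classical
  rw [sum_mulVec_sq_sub_sum_sq]
  refine abs_dotProduct_mulVec_le_of_diag_eq_zero (fun p => ?_) (fun p q hpq => ?_) x
  · simp [mul_apply, ← sq, hcols]
  · simpa [mul_apply, hpq] using hcoh p q hpq

end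

theorem ric_le_coherence_bound_general
    (m n : ℕ) (A : Matrix (Fin m) (Fin n) ℝ)
    (hcols : ∀ j : Fin n, Real.sqrt (∑ i, (A i j) ^ 2) = 1)
    (k : ℕ) (hk1 : 1 ≤ k)
    (μ : ℝ)
    (hμ : IsGreatest {v : ℝ | ∃ p q : Fin n, p ≠ q ∧ v = |∑ i, A i p * A i q|} μ)
    (δk : ℝ)
    (hδk : IsLeast {δ : ℝ | 0 ≤ δ ∧ ∀ x : Fin n → ℝ, 1 ≤ card0 x → card0 x ≤ k →
        ((1 - δ) * ∑ i, (x i) ^ 2 ≤ ∑ i, (A.mulVec x i) ^ 2 ∧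
          (∑ i, (A.mulVec x i) ^ 2) ≤ (1 + δ) * ∑ i, (x i) ^ 2)} δk) :
    δk ≤ ((k : ℝ) - 1) * μ := by
  obtain ⟨⟨p, q, -, hμ_eq⟩, hμ_ub⟩ := hμ
  have hμ0 : 0 ≤ μ := hμ_eq ▸ abs_nonneg _
  have hk : (1 : ℝ) ≤ k := by exact_mod_cast hk1
  refine hδk.2 ⟨mul_nonneg (by linarith) hμ0, fun x _ hxk => ?_⟩
  have hdev := abs_sum_mulVec_sq_sub_sum_sq_le A (fun j => Real.sqrt_eq_one.mp (hcols j))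
    (fun p q hpq => hμ_ub ⟨p, q, hpq, rfl⟩) x
  have hxk' : (card0 x : ℝ) ≤ k := by exact_mod_cast hxk
  have hQ : 0 ≤ ∑ p, x p ^ 2 := sum_nonneg fun p _ => sq_nonneg _
  have hoff : μ * ((∑ p, |x p|) ^ 2 - ∑ p, x p ^ 2) ≤ (k - 1) * μ * ∑ p, x p ^ 2 := by
    calc μ * ((∑ p, |x p|) ^ 2 - ∑ p, x p ^ 2) ≤ μ * ((card0 x - 1) * ∑ p, x p ^ 2) := by
          gcongr
          linarith [sq_sum_abs_le_card0_mul_sum_sq x]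
      _ ≤ (k - 1) * μ * ∑ p, x p ^ 2 := by
          rw [mul_comm _ μ, mul_assoc]
          gcongr
  obtain ⟨hlow, hupp⟩ := abs_sub_le_iff.mp (hdev.trans hoff)
  constructor <;> linarith

/-- Coherence bound on the restricted isometry constant: if `A` has unit Euclidean-norm
columns, `μ` is its mutual coherence (the maximum of `|A_pᵀ A_q|` over `p ≠ q`), and `δk`
is its order-`k` restricted isometry constant (the least `δ ≥ 0` such that
`(1-δ)‖x‖₂² ≤ ‖Ax‖₂² ≤ (1+δ)‖x‖₂²` for all `x` with `1 ≤ ‖x‖₀ ≤ k`), then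
`δk ≤ (k-1)·μ`. -/
theorem ric_le_coherence_bound
    (m n : ℕ) (hn : 2 ≤ n) (A : Matrix (Fin m) (Fin n) ℝ)
    (hcols : ∀ j : Fin n, Real.sqrt (∑ i, (A i j) ^ 2) = 1)
    (k : ℕ) (hk1 : 1 ≤ k) (hkn : k ≤ n)
    (μ : ℝ)
    (hμ : IsGreatest {v : ℝ | ∃ p q : Fin n, p ≠ q ∧ v = |∑ i, A i p * A i q|} μ)
    (δk : ℝ)
    (hδk : IsLeast {δ : ℝ | 0 ≤ δ ∧ ∀ x : Fin n → ℝ, 1 ≤ card0 x → card0 x ≤ k →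
        ((1 - δ) * ∑ i, (x i) ^ 2 ≤ ∑ i, (A.mulVec x i) ^ 2 ∧
          (∑ i, (A.mulVec x i) ^ 2) ≤ (1 + δ) * ∑ i, (x i) ^ 2)} δk) :
    δk ≤ ((k : ℝ) - 1) * μ :=
  ric_le_coherence_bound_general m n A hcols k hk1 μ hμ δk hδk
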